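/- arXiv:0709.1826 — 6 statements merged into one kernel-verified Lean document; each statement's English description precedes it below -/
import Mathlib

section
/- Let n ≥ 1, let c : (Fin n →₀ ℕ) → ℂ be a coefficient function that is not identically zero, and let R > 0 be such that for every z in the polydisc {z ∈ ℂⁿ : |z_k| < R for all k} the family J ↦ c_J·∏_k z_k^{J_k} is summable; define f(z) = Σ_J c_J·∏_k z_k^{J_k} on this polydisc. Then for every a ∈ ℝⁿ with a_k > 0 for all k: ν(log|f(·)|, a) = min{ Σ_k a_k·J_k : J with c_J ≠ 0 }, where log|f(z)| is interpreted as -∞ at points where f(z) = 0, and the minimum on the right-hand side exists because {J ∈ ℕⁿ : Σ_k a_k·J_k ≤ C} is finite for every C. -/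
open Filter Topology

/-- The directional weight `φ_a(z) = max_k a_k⁻¹ · log |z_k|`, where indices with
`z_k = 0` contribute `-∞` (i.e. are dropped from the maximum).  For `z ≠ 0` the
supremum below is a (finite) real number, recovered via `EReal.toReal`. -/
noncomputable def phiW {n : ℕ} (a : Fin n → ℝ) (z : Fin n → ℂ) : ℝ :=
  (⨆ k : Fin n, if z k = 0 then (⊥ : EReal)
    else (((a k)⁻¹ * Real.log (‖z k‖) : ℝ) : EReal)).toReal

/-- The directional Lelong number `ν(u,a) = liminf_{z→0, z≠0} u(z)/φ_a(z)` of an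
extended-real-valued function `u` (so that `u = log|f|` may take the value `-∞`
on the zero set of `f`), the lower limit and the quotient taken in the extended
reals along the punctured neighborhood filter of `0`. -/
noncomputable def dirLelongE {n : ℕ} (u : (Fin n → ℂ) → EReal) (a : Fin n → ℝ) : EReal :=
  liminf (fun z => u z / ((phiW a z : ℝ) : EReal)) (𝓝[≠] (0 : Fin n → ℂ))

/-!
Let `m` be the least weight `⟨a, J⟩` of a nonzero coefficient. Since `|z_k| ≤ exp (a_k φ_a(z))`,
`|c_J z^J| ≤ |c_J| exp (⟨a, J⟩ φ_a(z))`; when `φ_a(z) ≤ s₀` and `⟨a, J⟩ ≥ m` this is at most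
`|c_J r^J| exp (m (φ_a(z) - s₀))` with `r_k = exp (a_k s₀)` in the polydisc, so
`|f| ≤ C exp (m φ_a)` near `0` and `ν(log |f|, a) ≥ m`. Conversely, the weight-`m` part `P` of `f`
is a nonzero polynomial, so it does not vanish at some `w` with nonzero coordinates. Along the
curve `t ↦ (t ^ a_k w_k)_k` one has `φ_a = log t + φ_a(w)` and, by dominated convergence,
`t ^ (-m) f → P(w) ≠ 0`; so `log |f| / φ_a → m` along the curve and `ν(log |f|, a) ≤ m`.
-/

noncomputable section

def elogNorm (x : ℂ) : EReal := if x = 0 then ⊥ else ((Real.log ‖x‖ : ℝ) : EReal)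

section WeightedDegree

variable {σ : Type*} [Fintype σ]

def weightedDeg (a : σ → ℝ) (J : σ →₀ ℕ) : ℝ := ∑ k, a k * (J k : ℝ)

def seriesEval (c : (σ →₀ ℕ) → ℂ) (z : σ → ℂ) : ℂ := ∑' J : σ →₀ ℕ, c J * ∏ k, z k ^ J k

lemma finite_setOf_weightedDeg_le {a : σ → ℝ} (ha : ∀ k, 0 < a k) (B : ℝ) :
    {J : σ →₀ ℕ | weightedDeg a J ≤ B}.Finite := by
  classical
  refine (Set.finite_Iic (Finsupp.equivFunOnFinite.symm fun k => ⌈B / a k⌉₊)).subset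
    fun J hJ k => ?_
  have hJk : a k * (J k : ℝ) ≤ B :=
    (Finset.single_le_sum (f := fun j => a j * (J j : ℝ))
      (fun j _ => by have := ha j; positivity) (Finset.mem_univ k)).trans hJ
  exact Nat.cast_le.mp (((le_div_iff₀' (ha k)).mpr hJk).trans (Nat.le_ceil _))

lemma exists_isLeast_weightedDeg {a : σ → ℝ} (ha : ∀ k, 0 < a k) {c : (σ →₀ ℕ) → ℂ}
    (hc : ∃ J, c J ≠ 0) :
    ∃ J₀, c J₀ ≠ 0 ∧ IsLeast {x | ∃ J, c J ≠ 0 ∧ x = weightedDeg a J} (weightedDeg a J₀) := by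
  obtain ⟨J₁, hJ₁⟩ := hc
  obtain ⟨J₀, ⟨hJ₀, -⟩, hmin⟩ := Set.exists_min_image
    {J | c J ≠ 0 ∧ weightedDeg a J ≤ weightedDeg a J₁} (weightedDeg a)
    ((finite_setOf_weightedDeg_le ha _).subset fun J hJ => hJ.2) ⟨J₁, hJ₁, le_rfl⟩
  refine ⟨J₀, hJ₀, ⟨J₀, hJ₀, rfl⟩, ?_⟩
  rintro _ ⟨J, hJ, rfl⟩
  by_cases hJle : weightedDeg a J ≤ weightedDeg a J₁
  · exact hmin J ⟨hJ, hJle⟩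
  · exact (hmin J₁ ⟨hJ₁, le_rfl⟩).trans (le_of_not_ge hJle)

lemma prod_exp_mul_pow (a : σ → ℝ) (s : ℝ) (J : σ →₀ ℕ) :
    ∏ k, Real.exp (a k * s) ^ J k = Real.exp (weightedDeg a J * s) := by
  rw [weightedDeg, Finset.sum_mul, Real.exp_sum]
  refine Finset.prod_congr rfl fun k _ => ?_
  rw [← Real.exp_nat_mul]
  ring_nf

lemma prod_rpow_pow {t : ℝ} (ht : 0 < t) (a : σ → ℝ) (J : σ →₀ ℕ) :
    ∏ k, (t ^ a k) ^ J k = t ^ weightedDeg a J := by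
  simp only [Real.rpow_def_of_pos ht, mul_comm (Real.log t), prod_exp_mul_pow]

end WeightedDegree

section WeightedScale

variable {σ : Type*} {a : σ → ℝ} {t : ℝ}

def weightedScale (a : σ → ℝ) (t : ℝ) (z : σ → ℂ) : σ → ℂ := fun k => ((t ^ a k : ℝ) : ℂ) * z k

lemma weightedScale_apply_ne_zero (ht : 0 < t) {z : σ → ℂ} {k : σ} (hk : z k ≠ 0) :
    weightedScale a t z k ≠ 0 :=
  mul_ne_zero (Complex.ofReal_ne_zero.mpr (Real.rpow_pos_of_pos ht _).ne') hk

lemma prod_weightedScale_pow [Fintype σ] (ht : 0 < t) (z : σ → ℂ) (J : σ →₀ ℕ) :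
    ∏ k, weightedScale a t z k ^ J k = ((t ^ weightedDeg a J : ℝ) : ℂ) * ∏ k, z k ^ J k := by
  simp only [weightedScale, mul_pow, Finset.prod_mul_distrib, ← prod_rpow_pow ht,
    Complex.ofReal_prod, Complex.ofReal_pow]

lemma tendsto_weightedScale_nhds_zero (ha : ∀ k, 0 < a k) (z : σ → ℂ) :
    Tendsto (fun t => weightedScale a t z) (𝓝[>] 0) (𝓝 0) := by
  refine tendsto_pi_nhds.mpr fun k => ?_
  have h := (Real.continuousAt_rpow_const 0 (a k) (Or.inr (ha k).le)).tendsto.mono_left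
    (nhdsWithin_le_nhds (s := Set.Ioi 0))
  rw [Real.zero_rpow (ha k).ne'] at h
  simpa [weightedScale] using ((Complex.continuous_ofReal.tendsto 0).comp h).mul_const (z k)

lemma tendsto_weightedScale_nhdsNE_zero (ha : ∀ k, 0 < a k) {z : σ → ℂ} (hz : z ≠ 0) :
    Tendsto (fun t => weightedScale a t z) (𝓝[>] 0) (𝓝[≠] 0) := by
  refine tendsto_nhdsWithin_iff.mpr ⟨tendsto_weightedScale_nhds_zero ha z, ?_⟩
  obtain ⟨k, hk⟩ := Function.ne_iff.mp hz
  filter_upwards [self_mem_nhdsWithin] with t ht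
  exact Function.ne_iff.mpr ⟨k, weightedScale_apply_ne_zero ht hk⟩

end WeightedScale

section DirectionalWeight

variable {n : ℕ} {a : Fin n → ℝ} {z : Fin n → ℂ} {t : ℝ}

lemma exists_phiW_eq (hz : z ≠ 0) :
    ∃ k, z k ≠ 0 ∧ phiW a z = (a k)⁻¹ * Real.log ‖z k‖ ∧
      ∀ j, z j ≠ 0 → (a j)⁻¹ * Real.log ‖z j‖ ≤ (a k)⁻¹ * Real.log ‖z k‖ := by
  obtain ⟨j, hj⟩ : ∃ j, z j ≠ 0 := Function.ne_iff.mp hz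
  have : Nonempty (Fin n) := ⟨j⟩
  set G : Fin n → EReal := fun k => if z k = 0 then (⊥ : EReal)
    else (((a k)⁻¹ * Real.log (‖z k‖) : ℝ) : EReal) with hG
  have hG_coe : ∀ i, z i ≠ 0 → G i = (((a i)⁻¹ * Real.log (‖z i‖) : ℝ) : EReal) :=
    fun i hi => if_neg hi
  obtain ⟨k, hk⟩ := Finite.exists_max G
  have hzk : z k ≠ 0 := by
    intro h0
    have := hk j
    simp only [hG, if_pos h0, if_neg hj, le_bot_iff, EReal.coe_ne_bot] at this
  refine ⟨k, hzk, ?_, fun i hi => ?_⟩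
  · rw [phiW, ← hG, le_antisymm (iSup_le hk) (le_iSup G k), hG_coe k hzk, EReal.toReal_coe]
  · exact EReal.coe_le_coe_iff.mp (hG_coe i hi ▸ hG_coe k hzk ▸ hk i)

lemma le_phiW {k : Fin n} (hk : z k ≠ 0) : (a k)⁻¹ * Real.log ‖z k‖ ≤ phiW a z := by
  obtain ⟨j, -, hφ, hmax⟩ := exists_phiW_eq (a := a) (Function.ne_iff.mpr ⟨k, hk⟩)
  exact hφ ▸ hmax k hk

lemma norm_le_exp_mul_phiW {k : Fin n} (ha : 0 < a k) :
    ‖z k‖ ≤ Real.exp (a k * phiW a z) := by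
  by_cases hk : z k = 0
  · simp [hk, (Real.exp_pos _).le]
  calc ‖z k‖ = Real.exp (Real.log ‖z k‖) := (Real.exp_log (norm_pos_iff.mpr hk)).symm
    _ ≤ Real.exp (a k * phiW a z) :=
      Real.exp_le_exp.mpr ((inv_mul_le_iff₀ ha).mp (le_phiW hk))

lemma norm_prod_pow_le_exp_mul_phiW (ha : ∀ k, 0 < a k) (J : Fin n →₀ ℕ) :
    ‖∏ k, z k ^ J k‖ ≤ Real.exp (weightedDeg a J * phiW a z) := by
  rw [← prod_exp_mul_pow, norm_prod]
  gcongr with k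
  rw [norm_pow]
  gcongr
  exact norm_le_exp_mul_phiW (ha k)

lemma phiW_le_inv_mul_log_norm (ha : ∀ k, 0 < a k) {A : ℝ} (hA : ∀ k, a k ≤ A)
    (hz : z ≠ 0) (hz1 : ‖z‖ < 1) : phiW a z ≤ A⁻¹ * Real.log ‖z‖ := by
  obtain ⟨k, hk, hφ, -⟩ := exists_phiW_eq (a := a) hz
  have hlog : Real.log ‖z k‖ ≤ Real.log ‖z‖ :=
    Real.log_le_log (norm_pos_iff.mpr hk) (norm_le_pi_norm z k)
  have hneg : Real.log ‖z‖ < 0 := Real.log_neg (norm_pos_iff.mpr hz) hz1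
  rw [hφ]
  calc (a k)⁻¹ * Real.log ‖z k‖ ≤ (a k)⁻¹ * Real.log ‖z‖ :=
        mul_le_mul_of_nonneg_left hlog (inv_nonneg.mpr (ha k).le)
    _ ≤ A⁻¹ * Real.log ‖z‖ := mul_le_mul_of_nonpos_right (inv_anti₀ (ha k) (hA k)) hneg.le

lemma tendsto_phiW_atBot (ha : ∀ k, 0 < a k) :
    Tendsto (phiW a) (𝓝[≠] (0 : Fin n → ℂ)) atBot := by
  obtain ⟨A, hA⟩ := (Set.finite_range a).bddAbove
  have hA' : ∀ k, a k ≤ max A 1 := fun k => (hA ⟨k, rfl⟩).trans (le_max_left _ _)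
  have hlog : Tendsto (fun z : Fin n → ℂ => Real.log ‖z‖) (𝓝[≠] 0) atBot :=
    Real.tendsto_log_nhdsGT_zero.comp tendsto_norm_nhdsNE_zero
  have hA_pos : 0 < max A 1 := lt_max_of_lt_right one_pos
  refine tendsto_atBot_mono' _ ?_ (hlog.const_mul_atBot (inv_pos.mpr hA_pos))
  filter_upwards [self_mem_nhdsWithin, nhdsWithin_le_nhds (Metric.ball_mem_nhds 0 one_pos)]
    with z hz hz1
  exact phiW_le_inv_mul_log_norm ha hA' hz (mem_ball_zero_iff.mp hz1)

lemma inv_mul_log_norm_weightedScale (ht : 0 < t) {k : Fin n} (hak : a k ≠ 0) (hk : z k ≠ 0) :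
    (a k)⁻¹ * Real.log ‖weightedScale a t z k‖ = Real.log t + (a k)⁻¹ * Real.log ‖z k‖ := by
  rw [weightedScale, norm_mul, Complex.norm_real, Real.norm_of_nonneg (Real.rpow_nonneg ht.le _),
    Real.log_mul (Real.rpow_pos_of_pos ht _).ne' (norm_ne_zero_iff.mpr hk), Real.log_rpow ht]
  field_simp

lemma phiW_weightedScale (ha : ∀ k, a k ≠ 0) (ht : 0 < t) (hz : z ≠ 0) :
    phiW a (weightedScale a t z) = Real.log t + phiW a z := by
  obtain ⟨k, hk, hφ, -⟩ := exists_phiW_eq (a := a) hz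
  obtain ⟨j, hj, hφt, -⟩ := exists_phiW_eq (a := a) (z := weightedScale a t z)
    (Function.ne_iff.mpr ⟨k, weightedScale_apply_ne_zero ht hk⟩)
  have hzj : z j ≠ 0 := right_ne_zero_of_mul hj
  apply le_antisymm
  · rw [hφt, inv_mul_log_norm_weightedScale ht (ha j) hzj]
    linarith [le_phiW (a := a) hzj]
  · rw [hφ, ← inv_mul_log_norm_weightedScale ht (ha k) hk]
    exact le_phiW (weightedScale_apply_ne_zero ht hk)

end DirectionalWeight

section LowerBound

variable {n : ℕ} {a : Fin n → ℝ}

lemma exists_norm_seriesEval_le {c : (Fin n →₀ ℕ) → ℂ} {R : ℝ} (hR : 0 < R)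
    (hsum : ∀ z : Fin n → ℂ, (∀ k, ‖z k‖ < R) →
      Summable fun J : Fin n →₀ ℕ => c J * ∏ k, z k ^ J k)
    (ha : ∀ k, 0 < a k) {m : ℝ} (hmin : ∀ J, c J ≠ 0 → m ≤ weightedDeg a J) :
    ∃ C, ∀ᶠ z in 𝓝[≠] (0 : Fin n → ℂ),
      ‖seriesEval c z‖ ≤ C * Real.exp (m * phiW a z) := by
  obtain ⟨s₀, hs₀⟩ : ∃ s₀ : ℝ, ∀ k, Real.exp (a k * s₀) < R :=
    (eventually_all.mpr fun k => (Real.tendsto_exp_atBot.comp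
      (tendsto_id.const_mul_atBot (ha k))).eventually (gt_mem_nhds hR)).exists
  set r : Fin n → ℂ := fun k => (Real.exp (a k * s₀) : ℂ)
  have hr : Summable fun J => ‖c J * ∏ k, r k ^ J k‖ :=
    (hsum r fun k => by
      simpa only [r, Complex.norm_real, Real.norm_eq_abs, Real.abs_exp] using hs₀ k).norm
  have hnorm_r : ∀ J, ‖c J * ∏ k, r k ^ J k‖ = ‖c J‖ * Real.exp (weightedDeg a J * s₀) := by
    intro J
    simp only [r, norm_mul, norm_prod, norm_pow, Complex.norm_real, Real.norm_eq_abs, Real.abs_exp,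
      prod_exp_mul_pow]
  refine ⟨(∑' J, ‖c J * ∏ k, r k ^ J k‖) * Real.exp (-(m * s₀)), ?_⟩
  filter_upwards [(tendsto_phiW_atBot ha).eventually_le_atBot s₀, self_mem_nhdsWithin]
    with z hφ hz
  set φ := phiW a z
  have hterm : ∀ J,
      ‖c J * ∏ k, z k ^ J k‖ ≤ ‖c J * ∏ k, r k ^ J k‖ * Real.exp (m * (φ - s₀)) := by
    intro J
    by_cases hJ : c J = 0
    · simp [hJ]
    -- `(weightedDeg a J - m) * (φ - s₀) ≤ 0`
    have hexp : weightedDeg a J * φ ≤ weightedDeg a J * s₀ + m * (φ - s₀) := by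
      nlinarith [hmin J hJ]
    calc ‖c J * ∏ k, z k ^ J k‖ ≤ ‖c J‖ * Real.exp (weightedDeg a J * φ) := by
          rw [norm_mul]
          gcongr
          exact norm_prod_pow_le_exp_mul_phiW ha J
      _ ≤ ‖c J‖ * Real.exp (weightedDeg a J * s₀ + m * (φ - s₀)) := by gcongr
      _ = _ := by rw [hnorm_r, Real.exp_add, mul_assoc]
  calc ‖seriesEval c z‖ ≤ (∑' J, ‖c J * ∏ k, r k ^ J k‖) * Real.exp (m * (φ - s₀)) :=
        tsum_of_norm_bounded (hr.hasSum.mul_right _) hterm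
    _ = _ := by rw [mul_sub, sub_eq_add_neg, Real.exp_add, mul_comm (Real.exp _), mul_assoc]

lemma coe_add_div_le_elogNorm_div {x : ℂ} {m C s : ℝ} (hC : 0 < C) (hs : s < 0)
    (hx : ‖x‖ ≤ C * Real.exp (m * s)) :
    ((m + Real.log C / s : ℝ) : EReal) ≤ elogNorm x / (s : EReal) := by
  unfold elogNorm
  split_ifs with hx0
  · rw [EReal.bot_div_of_neg_ne_bot (EReal.coe_lt_coe_iff.mpr hs) (EReal.coe_ne_bot s)]
    exact le_top
  · have hlog := Real.log_le_log (norm_pos_iff.mpr hx0) hx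
    rw [Real.log_mul hC.ne' (Real.exp_pos _).ne', Real.log_exp] at hlog
    rw [← EReal.coe_div, EReal.coe_le_coe_iff, le_div_iff_of_neg hs, add_mul,
      div_mul_cancel₀ _ hs.ne]
    linarith

lemma le_dirLelongE_of_norm_le (F : (Fin n → ℂ) → ℂ) (ha : ∀ k, 0 < a k) {C m : ℝ}
    (hF : ∀ᶠ z in 𝓝[≠] 0, ‖F z‖ ≤ C * Real.exp (m * phiW a z)) :
    (m : EReal) ≤ dirLelongE (fun z => elogNorm (F z)) a := by
  have hC : 0 < max C 1 := lt_max_of_lt_right one_pos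
  have hlim : Tendsto (fun z => ((m + Real.log (max C 1) / phiW a z : ℝ) : EReal))
      (𝓝[≠] 0) (𝓝 m) := by
    simpa using EReal.tendsto_coe.mpr
      ((tendsto_const_nhds.div_atBot (tendsto_phiW_atBot ha)).const_add m)
  rw [dirLelongE, le_liminf_iff]
  intro y hy
  filter_upwards [hlim.eventually (eventually_gt_nhds hy), hF,
    (tendsto_phiW_atBot ha).eventually_lt_atBot 0] with z hyz hFz hφ
  refine hyz.trans_le (coe_add_div_le_elogNorm_div hC hφ (hFz.trans ?_))
  gcongr
  exact le_max_left _ _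

end LowerBound

section UpperBound

lemma tendsto_mul_add_div_add_of_tendsto_atBot {α : Type*} {l : Filter α} {s b : α → ℝ}
    {B : ℝ} (hs : Tendsto s l atBot) (hb : Tendsto b l (𝓝 B)) (m M : ℝ) :
    Tendsto (fun x => (m * s x + b x) / (s x + M)) l (𝓝 m) := by
  have hden : Tendsto (fun x => s x + M) l atBot := tendsto_atBot_add_const_right _ M hs
  have hquot := ((hb.sub_const (m * M)).div_atBot hden).const_add m
  rw [add_zero] at hquot
  refine hquot.congr' ?_
  filter_upwards [hden.eventually_ne_atBot 0] with x hx
  field_simp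
  ring

lemma exists_forall_ne_zero_sum_ne_zero {K σ : Type*} [CommRing K] [IsDomain K] [Infinite K]
    [Fintype σ] {T : Finset (σ →₀ ℕ)} {c : (σ →₀ ℕ) → K} {J₀ : σ →₀ ℕ} (hJ₀ : J₀ ∈ T)
    (hc : c J₀ ≠ 0) :
    ∃ w : σ → K, (∀ k, w k ≠ 0) ∧ ∑ J ∈ T, c J * ∏ k, w k ^ J k ≠ 0 := by
  classical
  set p : MvPolynomial σ K := ∑ J ∈ T, MvPolynomial.monomial J (c J)
  have hp : p ≠ 0 := fun h => hc <| by
    simpa [p, MvPolynomial.coeff_sum, MvPolynomial.coeff_monomial, hJ₀] using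
      congrArg (MvPolynomial.coeff J₀) h
  have heval : ∀ w, MvPolynomial.eval w p = ∑ J ∈ T, c J * ∏ k, w k ^ J k := by
    simp [p, MvPolynomial.eval_monomial, Finsupp.prod_fintype]
  by_contra! h
  refine hp (MvPolynomial.funext_set (fun _ => {0}ᶜ)
    (fun _ => (Set.finite_singleton 0).infinite_compl) fun w hw => ?_)
  rw [heval, map_zero]
  exact h w fun k => hw k trivial

lemma tendsto_rpow_nhdsGT_zero_of_nonneg {e : ℝ} (he : 0 ≤ e) :
    Tendsto (fun t : ℝ => t ^ e) (𝓝[>] 0) (𝓝 (if e = 0 then 1 else 0)) := by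
  split_ifs with he0
  · simp [he0]
  · simpa [Real.zero_rpow he0] using
      (Real.continuousAt_rpow_const 0 e (Or.inr he)).tendsto.mono_left
        (nhdsWithin_le_nhds (s := Set.Ioi 0))

lemma rpow_neg_mul_seriesEval_weightedScale {σ : Type*} [Fintype σ] {t : ℝ} (ht : 0 < t)
    (c : (σ →₀ ℕ) → ℂ) (a : σ → ℝ) (m : ℝ) (w : σ → ℂ) :
    ((t ^ (-m) : ℝ) : ℂ) * seriesEval c (weightedScale a t w)
      = ∑' J, c J * (∏ k, w k ^ J k) * ((t ^ (weightedDeg a J - m) : ℝ) : ℂ) := by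
  rw [seriesEval, ← tsum_mul_left]
  refine tsum_congr fun J => ?_
  simp only [prod_weightedScale_pow ht, Real.rpow_sub ht, Real.rpow_neg ht.le]
  push_cast
  ring

lemma norm_mul_rpow_sub_le {σ : Type*} [Fintype σ] {a : σ → ℝ} {J : σ →₀ ℕ} {m t t₁ : ℝ}
    (ht : 0 < t) (htt₁ : t ≤ t₁) (hm : m ≤ weightedDeg a J) (x : ℂ) (w : σ → ℂ) :
    ‖x * (∏ k, w k ^ J k) * ((t ^ (weightedDeg a J - m) : ℝ) : ℂ)‖
      ≤ ‖x * ∏ k, weightedScale a t₁ w k ^ J k‖ * t₁ ^ (-m) := by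
  have ht₁ : 0 < t₁ := ht.trans_le htt₁
  rw [prod_weightedScale_pow ht₁]
  simp only [norm_mul, Complex.norm_real, Real.norm_of_nonneg (Real.rpow_nonneg ht.le _),
    Real.norm_of_nonneg (Real.rpow_nonneg ht₁.le _)]
  calc ‖x‖ * ‖∏ k, w k ^ J k‖ * t ^ (weightedDeg a J - m)
      ≤ ‖x‖ * ‖∏ k, w k ^ J k‖ * t₁ ^ (weightedDeg a J - m) := by
        gcongr
    _ = ‖x‖ * (t₁ ^ weightedDeg a J * ‖∏ k, w k ^ J k‖) * t₁ ^ (-m) := by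
        rw [Real.rpow_sub ht₁, Real.rpow_neg ht₁.le]
        ring

lemma tendsto_rpow_neg_mul_seriesEval_weightedScale {σ : Type*} [Fintype σ]
    {c : (σ →₀ ℕ) → ℂ} {R : ℝ} (hR : 0 < R)
    (hsum : ∀ z : σ → ℂ, (∀ k, ‖z k‖ < R) → Summable fun J : σ →₀ ℕ => c J * ∏ k, z k ^ J k)
    {a : σ → ℝ} (ha : ∀ k, 0 < a k) {m : ℝ} (hmin : ∀ J, c J ≠ 0 → m ≤ weightedDeg a J)
    {T : Finset (σ →₀ ℕ)} (hT : ∀ J, J ∈ T ↔ weightedDeg a J = m) (w : σ → ℂ) :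
    Tendsto (fun t => ((t ^ (-m) : ℝ) : ℂ) * seriesEval c (weightedScale a t w)) (𝓝[>] 0)
      (𝓝 (∑ J ∈ T, c J * ∏ k, w k ^ J k)) := by
  obtain ⟨t₁, ht₁R, ht₁⟩ : ∃ t₁, (∀ k, ‖weightedScale a t₁ w k‖ < R) ∧ 0 < t₁ :=
    (((tendsto_weightedScale_nhds_zero ha w).eventually (Metric.ball_mem_nhds 0 hR)).and
      self_mem_nhdsWithin).exists.imp fun t ht =>
        ⟨fun k => (norm_le_pi_norm _ k).trans_lt (mem_ball_zero_iff.mp ht.1), ht.2⟩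
  have hlimit : ∀ J, Tendsto (fun t => c J * (∏ k, w k ^ J k) *
      ((t ^ (weightedDeg a J - m) : ℝ) : ℂ)) (𝓝[>] 0)
      (𝓝 (if J ∈ T then c J * ∏ k, w k ^ J k else 0)) := by
    intro J
    by_cases hJ : c J = 0
    · simp [hJ]
    have hrpow := tendsto_rpow_nhdsGT_zero_of_nonneg (sub_nonneg.mpr (hmin J hJ))
    simp only [sub_eq_zero, ← hT] at hrpow
    have hlim_eq : (if J ∈ T then c J * ∏ k, w k ^ J k else 0)
        = c J * (∏ k, w k ^ J k) * ((if J ∈ T then 1 else 0 : ℝ) : ℂ) := by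
      split_ifs <;> simp
    rw [hlim_eq]
    exact ((Complex.continuous_ofReal.tendsto _).comp hrpow).const_mul _
  have hbound : ∀ᶠ t in 𝓝[>] 0, ∀ J,
      ‖c J * (∏ k, w k ^ J k) * ((t ^ (weightedDeg a J - m) : ℝ) : ℂ)‖
        ≤ ‖c J * ∏ k, weightedScale a t₁ w k ^ J k‖ * t₁ ^ (-m) := by
    filter_upwards [Ioc_mem_nhdsGT ht₁] with t ⟨ht, htt₁⟩ J
    by_cases hJ : c J = 0
    · simp only [hJ, zero_mul, norm_zero]
      positivity
    exact norm_mul_rpow_sub_le ht htt₁ (hmin J hJ) _ w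
  have hsum_limit : ∑' J, (if J ∈ T then c J * ∏ k, w k ^ J k else 0)
      = ∑ J ∈ T, c J * ∏ k, w k ^ J k := by
    rw [tsum_eq_sum fun J hJ => if_neg hJ]
    exact Finset.sum_congr rfl fun J hJ => if_pos hJ
  rw [← hsum_limit]
  refine (tendsto_tsum_of_dominated_convergence ((hsum _ ht₁R).norm.mul_right _) hlimit
    hbound).congr' ?_
  filter_upwards [self_mem_nhdsWithin] with t ht
  exact (rpow_neg_mul_seriesEval_weightedScale ht c a m w).symm

variable {n : ℕ} {a : Fin n → ℝ}

lemma dirLelongE_le_of_tendsto (F : (Fin n → ℂ) → ℂ) (ha : ∀ k, 0 < a k) {w : Fin n → ℂ}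
    (hw : w ≠ 0) {m : ℝ} {L : ℂ} (hL : L ≠ 0)
    (hF : Tendsto (fun t => ((t ^ (-m) : ℝ) : ℂ) * F (weightedScale a t w)) (𝓝[>] 0) (𝓝 L)) :
    dirLelongE (fun z => elogNorm (F z)) a ≤ m := by
  set γ := fun t => weightedScale a t w
  set g := fun t => ((t ^ (-m) : ℝ) : ℂ) * F (γ t)
  have hratio : Tendsto (fun t => (((m * Real.log t + Real.log ‖g t‖) /
      (Real.log t + phiW a w) : ℝ) : EReal)) (𝓝[>] 0) (𝓝 m) :=
    EReal.tendsto_coe.mpr (tendsto_mul_add_div_add_of_tendsto_atBot Real.tendsto_log_nhdsGT_zero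
      (hF.norm.log (norm_ne_zero_iff.mpr hL)) m _)
  have hcurve : Tendsto (fun t => elogNorm (F (γ t)) / (phiW a (γ t) : EReal)) (𝓝[>] 0)
      (𝓝 m) := by
    refine hratio.congr' ?_
    filter_upwards [self_mem_nhdsWithin, hF.eventually_ne hL] with t (ht : 0 < t) hg
    have htm : 0 < t ^ m := Real.rpow_pos_of_pos ht m
    have hFg : F (γ t) = ((t ^ m : ℝ) : ℂ) * g t := by
      simp only [g, ← mul_assoc, ← Complex.ofReal_mul, ← Real.rpow_add ht, add_neg_cancel,
        Real.rpow_zero, Complex.ofReal_one, one_mul]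
    have hF0 : F (γ t) ≠ 0 := hFg ▸ mul_ne_zero (Complex.ofReal_ne_zero.mpr htm.ne') hg
    have hlog : Real.log ‖F (γ t)‖ = m * Real.log t + Real.log ‖g t‖ := by
      rw [hFg, norm_mul, Complex.norm_real, Real.norm_of_nonneg htm.le,
        Real.log_mul htm.ne' (norm_ne_zero_iff.mpr hg), Real.log_rpow ht]
    rw [elogNorm, if_neg hF0, phiW_weightedScale (fun k => (ha k).ne') ht hw, hlog,
      ← EReal.coe_div]
  calc dirLelongE (fun z => elogNorm (F z)) a
      ≤ liminf (fun t => elogNorm (F (γ t)) / (phiW a (γ t) : EReal)) (𝓝[>] 0) :=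
        liminf_le_liminf_of_le (tendsto_weightedScale_nhdsNE_zero ha hw)
    _ = m := hcurve.liminf_eq

lemma dirLelongE_seriesEval_le (hn : 1 ≤ n) {c : (Fin n →₀ ℕ) → ℂ} {R : ℝ} (hR : 0 < R)
    (hsum : ∀ z : Fin n → ℂ, (∀ k, ‖z k‖ < R) →
      Summable fun J : Fin n →₀ ℕ => c J * ∏ k, z k ^ J k)
    (ha : ∀ k, 0 < a k) {J₀ : Fin n →₀ ℕ} (hJ₀ : c J₀ ≠ 0)
    (hmin : ∀ J, c J ≠ 0 → weightedDeg a J₀ ≤ weightedDeg a J) :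
    dirLelongE (fun z => elogNorm (seriesEval c z)) a ≤ weightedDeg a J₀ := by
  classical
  set m := weightedDeg a J₀
  set T := ((finite_setOf_weightedDeg_le ha m).subset
    fun J (hJ : weightedDeg a J = m) => hJ.le).toFinset
  have hT : ∀ J, J ∈ T ↔ weightedDeg a J = m := fun J => Set.Finite.mem_toFinset _
  obtain ⟨w, hw, hPw⟩ := exists_forall_ne_zero_sum_ne_zero ((hT J₀).mpr rfl) hJ₀
  have hw0 : w ≠ 0 := fun h => hw ⟨0, hn⟩ (congrFun h _)
  exact dirLelongE_le_of_tendsto _ ha hw0 hPw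
    (tendsto_rpow_neg_mul_seriesEval_weightedScale hR hsum ha hmin hT w)

end UpperBound

end

/-- **Kiselman's directional Lelong number of `log|f|` equals the index of `f`
with respect to the weight `a`:** if `f(z) = Σ_J c_J z^J` is given by a power
series summable on a polydisc of radius `R > 0` with not all `c_J = 0`, then
`ν(log|f|, a) = min { ⟨a, J⟩ : c_J ≠ 0 }`. -/
theorem dirLelong_log_abs_eq_index (n : ℕ) (hn : 1 ≤ n)
    (c : (Fin n →₀ ℕ) → ℂ) (hc : ∃ J, c J ≠ 0) (R : ℝ) (hR : 0 < R)
    (hsum : ∀ z : Fin n → ℂ, (∀ k, ‖z k‖ < R) →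
      Summable fun J : Fin n →₀ ℕ => c J * ∏ k, z k ^ J k)
    (a : Fin n → ℝ) (ha : ∀ k, 0 < a k) :
    dirLelongE
        (fun z => if (∑' J : Fin n →₀ ℕ, c J * ∏ k, z k ^ J k) = 0 then (⊥ : EReal)
          else ((Real.log (‖∑' J : Fin n →₀ ℕ, c J * ∏ k, z k ^ J k‖) : ℝ) : EReal))
        a
      = ((sInf {x : ℝ | ∃ J : Fin n →₀ ℕ, c J ≠ 0 ∧ x = ∑ k, a k * (J k : ℝ)} : ℝ) : EReal) := by
  obtain ⟨J₀, hJ₀, hleast⟩ := exists_isLeast_weightedDeg ha hc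
  have hmin : ∀ J, c J ≠ 0 → weightedDeg a J₀ ≤ weightedDeg a J :=
    fun J hJ => hleast.2 ⟨J, hJ, rfl⟩
  obtain ⟨C, hC⟩ := exists_norm_seriesEval_le hR hsum ha hmin
  change dirLelongE (fun z => elogNorm (seriesEval c z)) a
    = ((sInf {x | ∃ J, c J ≠ 0 ∧ x = weightedDeg a J} : ℝ) : EReal)
  rw [hleast.csInf_eq]
  exact le_antisymm (dirLelongE_seriesEval_le hn hR hsum ha hJ₀ hmin)
    (le_dirLelongE_of_norm_le _ ha hC)
end

section
/- Let n ≥ 1, let f and g be nonzero formal power series in n variables over ℂ (elements of MvPowerSeries (Fin n) ℂ), and let a ∈ ℝⁿ with a_i > 0 for all i. For a nonzero formal power series h, define its a-weighted order w_a(h) = inf{ Σ_i a_i·J_i : J ∈ ℕⁿ with the coefficient of z^J in h nonzero }; this infimum is attained (it is a minimum), since {J ∈ ℕⁿ : Σ_i a_i·J_i ≤ C} is finite for every C. Then f·g ≠ 0 and w_a(f·g) = w_a(f) + w_a(g). -/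
/-- The `a`-weighted order of a formal power series `h` in `n` variables:
`w_a(h) = inf { Σ_i a_i·J_i : the coefficient of z^J in h is nonzero }`
(for nonzero `h` and positive `a` this infimum is attained and finite). -/
noncomputable def weightedOrder {n : ℕ} (a : Fin n → ℝ) (h : MvPowerSeries (Fin n) ℂ) : ℝ :=
  sInf {x : ℝ | ∃ J : Fin n →₀ ℕ, MvPowerSeries.coeff J h ≠ 0 ∧ x = ∑ i, a i * (J i : ℝ)}

/-!
Break the ties of the weight `w_a` lexicographically: `J ↦ (w_a(J), J)` is an injective additive
map into the totally ordered cancellative monoid `ℝ ×ₗ Lex (σ →₀ ℕ)`. Since the sublevel sets of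
`w_a` are finite, every nonzero series has a smallest exponent for this order. If `J₀` and `K₀`
are those of `f` and `g`, the only way to write `J₀ + K₀ = J + K` with `J`, `K` exponents of `f`
and `g` is `J = J₀`, `K = K₀`, so the coefficient of `f * g` at `J₀ + K₀` is
`f_{J₀} g_{K₀} ≠ 0`. Every exponent of `f * g` is a sum of exponents of `f` and `g`, hence
of weight at least `w_a(J₀) + w_a(K₀)`.
-/

namespace Finsupp

variable {σ : Type*}

theorem sum_mul_eq_weight [Fintype σ] (a : σ → ℝ) (J : σ →₀ ℕ) :
    ∑ i, a i * (J i : ℝ) = weight a J := by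
  simp [weight_eq_sum, mul_comm]

theorem finite_setOf_weight_le [Fintype σ] {a : σ → ℝ} (ha : ∀ i, 0 < a i) (c : ℝ) :
    {J : σ →₀ ℕ | weight a J ≤ c}.Finite := by
  classical
  refine (Set.finite_Icc 0 (equivFunOnFinite.symm fun i => ⌊c / a i⌋₊)).subset fun J hJ => ?_
  refine ⟨zero_le, le_def.2 fun i => ?_⟩
  have hterm : a i * (J i : ℝ) ≤ c := calc
    a i * (J i : ℝ) ≤ ∑ j, a j * (J j : ℝ) :=
      Finset.single_le_sum (fun j _ => mul_nonneg (ha j).le (Nat.cast_nonneg _))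
        (Finset.mem_univ i)
    _ = weight a J := sum_mul_eq_weight a J
    _ ≤ c := hJ
  simpa using Nat.le_floor ((le_div_iff₀' (ha i)).2 hterm)

noncomputable def weightLex (a : σ → ℝ) : (σ →₀ ℕ) →+ ℝ ×ₗ Lex (σ →₀ ℕ) where
  toFun J := toLex (weight a J, toLex J)
  map_zero' := by simp
  map_add' J K := by simp only [map_add]; rfl

theorem weightLex_injective (a : σ → ℝ) : Function.Injective (weightLex a) :=
  fun _ _ h => toLex.injective (congrArg (fun x => (ofLex x).2) h)

theorem weight_le_of_weightLex_le [LinearOrder σ] {a : σ → ℝ} {J K : σ →₀ ℕ}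
    (h : weightLex a J ≤ weightLex a K) :
    weight a J ≤ weight a K :=
  Prod.Lex.monotone_fst _ _ h

end Finsupp

namespace MvPowerSeries

open Finsupp

variable {σ R : Type*}

theorem exists_add_eq_of_coeff_mul_ne_zero [Semiring R] {f g : MvPowerSeries σ R}
    {L : σ →₀ ℕ} (hL : coeff L (f * g) ≠ 0) :
    ∃ J K, J + K = L ∧ coeff J f ≠ 0 ∧ coeff K g ≠ 0 := by
  classical
  rw [coeff_mul] at hL
  obtain ⟨⟨J, K⟩, hJK, hne⟩ := Finset.exists_ne_zero_of_sum_ne_zero hL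
  exact ⟨J, K, Finset.HasAntidiagonal.mem_antidiagonal.1 hJK, left_ne_zero_of_mul hne,
    right_ne_zero_of_mul hne⟩

theorem coeff_add_mul_of_forall_le [Semiring R] {Γ : Type*} [AddCommMonoid Γ] [PartialOrder Γ]
    [IsOrderedCancelAddMonoid Γ] {v : (σ →₀ ℕ) →+ Γ} (hv : Function.Injective v)
    {f g : MvPowerSeries σ R} {J₀ K₀ : σ →₀ ℕ}
    (hJ₀ : ∀ J, coeff J f ≠ 0 → v J₀ ≤ v J) (hK₀ : ∀ K, coeff K g ≠ 0 → v K₀ ≤ v K) :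
    coeff (J₀ + K₀) (f * g) = coeff J₀ f * coeff K₀ g := by
  classical
  rw [coeff_mul]
  refine Finset.sum_eq_single_of_mem (J₀, K₀) (Finset.HasAntidiagonal.mem_antidiagonal.2 rfl) ?_
  rintro ⟨J, K⟩ hJK hne
  by_contra hprod
  have hv_eq : v J₀ + v K₀ = v J + v K := by
    rw [← map_add, ← map_add, Finset.HasAntidiagonal.mem_antidiagonal.1 hJK]
  obtain ⟨hJ, hK⟩ := (add_eq_add_iff_eq_and_eq (hJ₀ J (left_ne_zero_of_mul hprod))
    (hK₀ K (right_ne_zero_of_mul hprod))).1 hv_eq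
  exact hne (by rw [hv hJ, hv hK])

theorem exists_coeff_ne_zero_forall_weightLex_le [Semiring R] [Fintype σ] [LinearOrder σ]
    {a : σ → ℝ} (ha : ∀ i, 0 < a i) {h : MvPowerSeries σ R} (hh : h ≠ 0) :
    ∃ J₀, coeff J₀ h ≠ 0 ∧ ∀ J, coeff J h ≠ 0 → weightLex a J₀ ≤ weightLex a J := by
  obtain ⟨c, hc⟩ := (ne_zero_iff_exists_coeff_ne_zero h).1 hh
  have hfin : {J | coeff J h ≠ 0 ∧ weight a J ≤ weight a c}.Finite :=
    (finite_setOf_weight_le ha _).subset fun J hJ => hJ.2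
  obtain ⟨J₀, hJ₀, hJ₀min⟩ :=
    hfin.toFinset.exists_min_image (weightLex a) ⟨c, by simp [hc]⟩
  rw [Set.Finite.mem_toFinset] at hJ₀
  refine ⟨J₀, hJ₀.1, fun J hJ => ?_⟩
  by_cases hJc : weight a J ≤ weight a c
  · exact hJ₀min J (by simp [hJ, hJc])
  · exact (Prod.Lex.lt_iff.2 <| Or.inl <| hJ₀.2.trans_lt (not_le.1 hJc)).le

end MvPowerSeries

open MvPowerSeries Finsupp

theorem weightedOrder_eq_weight {n : ℕ} {a : Fin n → ℝ} {h : MvPowerSeries (Fin n) ℂ}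
    {J₀ : Fin n →₀ ℕ} (hJ₀ : coeff J₀ h ≠ 0)
    (hmin : ∀ J, coeff J h ≠ 0 → weight a J₀ ≤ weight a J) :
    weightedOrder a h = weight a J₀ := by
  refine IsLeast.csInf_eq ⟨⟨J₀, hJ₀, (sum_mul_eq_weight a J₀).symm⟩, ?_⟩
  rintro _ ⟨J, hJ, rfl⟩
  rw [sum_mul_eq_weight]
  exact hmin J hJ

theorem weightedOrder_mul_general (n : ℕ)
    (f g : MvPowerSeries (Fin n) ℂ) (hf : f ≠ 0) (hg : g ≠ 0)
    (a : Fin n → ℝ) (ha : ∀ i, 0 < a i) :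
    f * g ≠ 0 ∧ weightedOrder a (f * g) = weightedOrder a f + weightedOrder a g := by
  obtain ⟨J₀, hJ₀, hJ₀min⟩ := exists_coeff_ne_zero_forall_weightLex_le ha hf
  obtain ⟨K₀, hK₀, hK₀min⟩ := exists_coeff_ne_zero_forall_weightLex_le ha hg
  have hcoeff : coeff (J₀ + K₀) (f * g) ≠ 0 := by
    rw [coeff_add_mul_of_forall_le (weightLex_injective a) hJ₀min hK₀min]
    exact mul_ne_zero hJ₀ hK₀
  have hmin : ∀ L, coeff L (f * g) ≠ 0 → weight a (J₀ + K₀) ≤ weight a L := by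
    intro L hL
    obtain ⟨J, K, rfl, hJ, hK⟩ := exists_add_eq_of_coeff_mul_ne_zero hL
    rw [map_add, map_add]
    exact add_le_add (weight_le_of_weightLex_le (hJ₀min J hJ))
      (weight_le_of_weightLex_le (hK₀min K hK))
  refine ⟨ne_zero_iff_exists_coeff_ne_zero _ |>.2 ⟨_, hcoeff⟩, ?_⟩
  rw [weightedOrder_eq_weight hcoeff hmin, map_add,
    weightedOrder_eq_weight hJ₀ fun J hJ => weight_le_of_weightLex_le (hJ₀min J hJ),
    weightedOrder_eq_weight hK₀ fun K hK => weight_le_of_weightLex_le (hK₀min K hK)]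

/-- **The monomial valuation is multiplicative:** for nonzero formal power series
`f`, `g` over `ℂ` and a positive weight `a`, one has `f·g ≠ 0` and
`w_a(f·g) = w_a(f) + w_a(g)`. -/
theorem weightedOrder_mul (n : ℕ) (hn : 1 ≤ n)
    (f g : MvPowerSeries (Fin n) ℂ) (hf : f ≠ 0) (hg : g ≠ 0)
    (a : Fin n → ℝ) (ha : ∀ i, 0 < a i) :
    f * g ≠ 0 ∧ weightedOrder a (f * g) = weightedOrder a f + weightedOrder a g :=
  weightedOrder_mul_general n f g hf hg a ha
end

section
/- Let n ≥ 1 and let p and q be nonzero polynomials in n variables over ℂ (elements of MvPolynomial (Fin n) ℂ). For a nonzero polynomial h, define its Newton polytope N(h) = convexHull ℝ { (J : ℝⁿ) : the coefficient of z^J in h is nonzero }, where multi-indices J ∈ ℕⁿ are regarded as points of ℝⁿ. Then N(p·q) = N(p) + N(q), the right-hand side being the Minkowski sum {x + y : x ∈ N(p), y ∈ N(q)}. -/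
/-!
The exponents of `p * q` lie in `supp p + supp q`, which gives `N(p·q) ⊆ N(p) + N(q)` since
`conv (A + B) = conv A + conv B`. Conversely, `N(p) + N(q)` is the convex hull of its extreme
points, and an extreme point `v` of `conv (supp p + supp q)` is a sum `a + b` of exponents in
only one way: from a second decomposition `v = a' + b'`, `v` would be the midpoint of the two
points `a + b'` and `a' + b` of the set. Hence the coefficient of `z^(a+b)` in `p * q` is the
single product `p_a q_b ≠ 0`, so `v` is an exponent of `p * q`.
-/

open Pointwise

/-- The Newton polytope of a polynomial `h` in `n` variables: the convex hull in
`ℝⁿ` of the exponent multi-indices of the monomials occurring in `h`. -/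
noncomputable def newtonPolytope {n : ℕ} (h : MvPolynomial (Fin n) ℂ) : Set (Fin n → ℝ) :=
  convexHull ℝ {x : Fin n → ℝ | ∃ J ∈ h.support, x = fun i => (J i : ℝ)}

section ExtremePoints

variable {E : Type*} [AddCommGroup E] [Module ℝ E]

theorem eq_and_eq_of_add_mem_extremePoints_convexHull_add {s t : Set E} {a a' b b' : E}
    (ha : a ∈ s) (ha' : a' ∈ s) (hb : b ∈ t) (hb' : b' ∈ t) (hsum : a' + b' = a + b)
    (hext : a + b ∈ (convexHull ℝ (s + t)).extremePoints ℝ) : a' = a ∧ b' = b := by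
  have hmem {x y : E} (hx : x ∈ s) (hy : y ∈ t) : x + y ∈ convexHull ℝ (s + t) :=
    subset_convexHull ℝ _ (Set.add_mem_add hx hy)
  have hmid : a + b ∈ openSegment ℝ (a + b') (a' + b) := by
    refine ⟨1 / 2, 1 / 2, by norm_num, by norm_num, by norm_num, ?_⟩
    calc (1 / 2 : ℝ) • (a + b') + (1 / 2 : ℝ) • (a' + b)
        = (1 / 2 : ℝ) • ((a' + b') + (a + b)) := by module
      _ = a + b := by rw [hsum]; module
  have hb'b : b' = b := add_left_cancel (hext.2 (hmem ha hb') (hmem ha' hb) hmid)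
  exact ⟨add_right_cancel (hb'b ▸ hsum), hb'b⟩

variable [TopologicalSpace E] [T2Space E] [IsTopologicalAddGroup E] [ContinuousSMul ℝ E]
  [LocallyConvexSpace ℝ E]

theorem Set.Finite.convexHull_extremePoints_convexHull {s : Set E} (hs : s.Finite) :
    convexHull ℝ ((convexHull ℝ s).extremePoints ℝ) = convexHull ℝ s := by
  have hclosed : IsClosed (convexHull ℝ ((convexHull ℝ s).extremePoints ℝ)) :=
    (hs.subset extremePoints_convexHull_subset).isClosed_convexHull ℝ
  rw [← hclosed.closure_eq]
  exact closure_convexHull_extremePoints (hs.isCompact_convexHull ℝ) (convex_convexHull ℝ s)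

end ExtremePoints

namespace MvPolynomial

variable {σ R E : Type*} [CommSemiring R] [NoZeroDivisors R] [AddCommGroup E] [Module ℝ E]

theorem add_mem_support_mul_of_uniqueAdd {p q : MvPolynomial σ R} {a b : σ →₀ ℕ}
    (ha : a ∈ p.support) (hb : b ∈ q.support) (huniq : UniqueAdd p.support q.support a b) :
    a + b ∈ (p * q).support := by
  rw [mem_support_iff] at ha hb ⊢
  rw [coeff, AddMonoidAlgebra.coeff_mul_add_of_uniqueAdd huniq]
  exact mul_ne_zero ha hb

theorem extremePoints_convexHull_image_add_subset {φ : (σ →₀ ℕ) →+ E}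
    (hφ : Function.Injective φ) (p q : MvPolynomial σ R) :
    (convexHull ℝ (φ '' p.support + φ '' q.support)).extremePoints ℝ ⊆ φ '' (p * q).support := by
  intro v hv
  obtain ⟨_, ⟨a, ha, rfl⟩, _, ⟨b, hb, rfl⟩, rfl⟩ := extremePoints_convexHull_subset hv
  refine ⟨a + b, add_mem_support_mul_of_uniqueAdd ha hb fun a' b' ha' hb' hsum => ?_, map_add φ a b⟩
  have hφeq := eq_and_eq_of_add_mem_extremePoints_convexHull_add (Set.mem_image_of_mem φ ha)
    (Set.mem_image_of_mem φ ha') (Set.mem_image_of_mem φ hb) (Set.mem_image_of_mem φ hb')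
    (by rw [← map_add, ← map_add, hsum]) hv
  exact ⟨hφ hφeq.1, hφ hφeq.2⟩

variable [TopologicalSpace E] [T2Space E] [IsTopologicalAddGroup E] [ContinuousSMul ℝ E]
  [LocallyConvexSpace ℝ E]

theorem convexHull_image_support_mul {φ : (σ →₀ ℕ) →+ E} (hφ : Function.Injective φ)
    (p q : MvPolynomial σ R) :
    convexHull ℝ (φ '' (p * q).support) =
      convexHull ℝ (φ '' p.support) + convexHull ℝ (φ '' q.support) := by
  classical
  rw [← convexHull_add]
  apply (convexHull_mono _).antisymm
  · have hfin : (φ '' p.support + φ '' q.support).Finite :=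
      (p.support.finite_toSet.image φ).add (q.support.finite_toSet.image φ)
    rw [← hfin.convexHull_extremePoints_convexHull]
    exact convexHull_mono (extremePoints_convexHull_image_add_subset hφ p q)
  · rw [← Set.image_add, ← Finset.coe_add]
    exact Set.image_mono (support_mul p q)

end MvPolynomial

def exponentVector (σ : Type*) : (σ →₀ ℕ) →+ (σ → ℝ) where
  toFun J i := J i
  map_zero' := by ext; simp
  map_add' J K := by ext; simp

theorem exponentVector_injective (σ : Type*) : Function.Injective (exponentVector σ) :=
  fun _ _ h => Finsupp.ext fun i => Nat.cast_injective (congrFun h i)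

theorem newtonPolytope_eq_convexHull_image {n : ℕ} (h : MvPolynomial (Fin n) ℂ) :
    newtonPolytope h = convexHull ℝ (exponentVector (Fin n) '' h.support) := by
  rw [newtonPolytope]
  congr 1
  ext x
  simp [exponentVector, eq_comm]

theorem newtonPolytope_mul_general (n : ℕ)
    (p q : MvPolynomial (Fin n) ℂ) :
    newtonPolytope (p * q) = newtonPolytope p + newtonPolytope q := by
  simp only [newtonPolytope_eq_convexHull_image]
  exact MvPolynomial.convexHull_image_support_mul (exponentVector_injective _) p q

/-- **Multiplicativity of the Newton polytope:** for nonzero polynomials `p`, `q`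
in `n` variables over `ℂ`, the Newton polytope of the product is the Minkowski
sum of the Newton polytopes: `N(p·q) = N(p) + N(q)`. -/
theorem newtonPolytope_mul (n : ℕ) (hn : 1 ≤ n)
    (p q : MvPolynomial (Fin n) ℂ) (hp : p ≠ 0) (hq : q ≠ 0) :
    newtonPolytope (p * q) = newtonPolytope p + newtonPolytope q :=
  newtonPolytope_mul_general n p q
end

section
/- Let n ≥ 1 and write ℝ₊ⁿ = {x ∈ ℝⁿ : x_i ≥ 0 for all i}. Let Γ ⊆ ℝ₊ⁿ be a nonempty closed convex set that is complete, i.e. Γ + ℝ₊ⁿ ⊆ Γ. Then Γ = { b ∈ ℝ₊ⁿ : for every t ∈ ℝⁿ with t_i ≤ 0 for all i, ⟨b,t⟩ ≤ sup_{x∈Γ} ⟨x,t⟩ }, where ⟨·,·⟩ is the Euclidean inner product. -/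
open Pointwise

/-- The nonnegative orthant `ℝ₊ⁿ = {x ∈ ℝⁿ : xᵢ ≥ 0 for all i}`. -/
def orthant (n : ℕ) : Set (Fin n → ℝ) := {x | ∀ i, 0 ≤ x i}

/-- **Duality for complete convex subsets of the nonnegative orthant:** a nonempty
closed convex set `Γ ⊆ ℝ₊ⁿ` with `Γ + ℝ₊ⁿ ⊆ Γ` is recovered from its support
function on the nonpositive orthant:
`Γ = { b ∈ ℝ₊ⁿ : ∀ t ≤ 0, ⟨b,t⟩ ≤ sup_{x∈Γ} ⟨x,t⟩ }`. -/
theorem complete_convex_eq_support_dual (n : ℕ) (hn : 1 ≤ n)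
    (Γ : Set (Fin n → ℝ)) (hne : Γ.Nonempty) (hcl : IsClosed Γ) (hconv : Convex ℝ Γ)
    (hsub : Γ ⊆ orthant n) (hcomp : Γ + orthant n ⊆ Γ) :
    Γ = {b | b ∈ orthant n ∧ ∀ t : Fin n → ℝ, (∀ i, t i ≤ 0) →
          ∑ i, b i * t i ≤ sSup {s : ℝ | ∃ x ∈ Γ, s = ∑ i, x i * t i}} := by
  ext b
  constructor
  · intro hb
    refine ⟨hsub hb, fun t ht => ?_⟩
    apply le_csSup
    · refine ⟨0, fun s hs => ?_⟩
      obtain ⟨x, hx, rfl⟩ := hs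
      exact Finset.sum_nonpos fun i _ =>
        mul_nonpos_of_nonneg_of_nonpos (hsub hx i) (ht i)
    · exact ⟨b, hb, rfl⟩
  · rintro ⟨hb, hsup⟩
    by_contra hbΓ
    obtain ⟨f, u, hfu, hub⟩ := geometric_hahn_banach_closed_point hconv hcl hbΓ
    set t : Fin n → ℝ := fun i => f (Pi.single i 1) with htdef
    have hf : ∀ x : Fin n → ℝ, f x = ∑ i, x i * t i := by
      intro x
      conv_lhs => rw [pi_eq_sum_univ x]
      rw [map_sum]
      refine Finset.sum_congr rfl fun i _ => ?_
      rw [map_smul, smul_eq_mul]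
      congr 2
      ext j
      simp [Pi.single_apply, eq_comm]
    have htneg : ∀ i, t i ≤ 0 := by
      intro i
      by_contra h
      push_neg at h
      obtain ⟨x0, hx0⟩ := hne
      set s := (u - f x0) / t i + 1 with hs
      have h1 : 0 < u - f x0 := sub_pos.mpr (hfu x0 hx0)
      have hs0 : 0 ≤ s := by
        have : 0 < (u - f x0) / t i := by positivity
        simp only [hs]; linarith
      have hmem : x0 + s • (Pi.single i 1 : Fin n → ℝ) ∈ Γ := by
        apply hcomp
        refine Set.add_mem_add hx0 ?_
        intro j
        by_cases hji : j = i <;> simp [hji, Pi.single_apply, hs0]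
      have hlt := hfu _ hmem
      rw [map_add, map_smul] at hlt
      have hlt' : f x0 + s * t i < u := by
        simpa [smul_eq_mul] using hlt
      have heq : f x0 + s * t i = u + t i := by
        rw [hs]
        field_simp
        ring
      linarith
    have h1 := hsup t htneg
    have h2 : sSup {s : ℝ | ∃ x ∈ Γ, s = ∑ i, x i * t i} ≤ u := by
      apply csSup_le
      · obtain ⟨x0, hx0⟩ := hne
        exact ⟨_, x0, hx0, rfl⟩
      · rintro s ⟨x, hx, rfl⟩
        rw [← hf]
        exact (hfu x hx).le
    have h3 : u < ∑ i, b i * t i := by rw [← hf]; exact hub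
    linarith
end

section
/- Let n ≥ 1 and write ℝ₊ⁿ = {x ∈ ℝⁿ : x_i ≥ 0 for all i}. Let Γ₁, Γ₂ ⊆ ℝ₊ⁿ be nonempty closed convex sets that are complete, i.e. Γᵢ + ℝ₊ⁿ ⊆ Γᵢ for i = 1,2. Then convexHull ℝ (Γ₁ ∪ Γ₂) is a closed convex subset of ℝ₊ⁿ and is complete: convexHull ℝ (Γ₁ ∪ Γ₂) + ℝ₊ⁿ ⊆ convexHull ℝ (Γ₁ ∪ Γ₂). -/
open Pointwise Set Filter Bornology Topology Metric

lemma orthant_convex (n : ℕ) : Convex ℝ (orthant n) := by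
  intro x hx y hy a b ha hb _ i
  exact add_nonneg (mul_nonneg ha (hx i)) (mul_nonneg hb (hy i))

lemma aux_mem {n : ℕ} {Γ : Set (Fin n → ℝ)} (hcl : IsClosed Γ)
    {p : ℕ → ℝ} {a : ℕ → Fin n → ℝ} (ha : ∀ k, a k ∈ Γ) {t : ℝ} (ht : 0 < t)
    (hp : Tendsto p atTop (𝓝 t)) {u : Fin n → ℝ}
    (hu : Tendsto (fun k => p k • a k) atTop (𝓝 u)) : t⁻¹ • u ∈ Γ := by
  have hev : ∀ᶠ k in atTop, 0 < p k := hp.eventually (eventually_gt_nhds ht)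
  have h1 : Tendsto (fun k => (p k)⁻¹ • (p k • a k)) atTop (𝓝 (t⁻¹ • u)) :=
    (hp.inv₀ ht.ne').smul hu
  have h2 : Tendsto a atTop (𝓝 (t⁻¹ • u)) := by
    refine h1.congr' (hev.mono fun k hk => ?_)
    simp [inv_smul_smul₀ hk.ne']
  exact hcl.mem_of_tendsto h2 (Eventually.of_forall ha)

/-- **Closure of complete convex sets under tropical addition:** for nonempty
closed convex complete `Γ₁, Γ₂ ⊆ ℝ₊ⁿ`, the convex hull of the union
`convexHull ℝ (Γ₁ ∪ Γ₂)` is a closed convex subset of `ℝ₊ⁿ` and is complete. -/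
theorem convexHull_union_complete (n : ℕ) (hn : 1 ≤ n)
    (Γ₁ Γ₂ : Set (Fin n → ℝ))
    (hne₁ : Γ₁.Nonempty) (hcl₁ : IsClosed Γ₁) (hconv₁ : Convex ℝ Γ₁)
    (hsub₁ : Γ₁ ⊆ orthant n) (hcomp₁ : Γ₁ + orthant n ⊆ Γ₁)
    (hne₂ : Γ₂.Nonempty) (hcl₂ : IsClosed Γ₂) (hconv₂ : Convex ℝ Γ₂)
    (hsub₂ : Γ₂ ⊆ orthant n) (hcomp₂ : Γ₂ + orthant n ⊆ Γ₂) :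
    IsClosed (convexHull ℝ (Γ₁ ∪ Γ₂)) ∧ Convex ℝ (convexHull ℝ (Γ₁ ∪ Γ₂)) ∧
      convexHull ℝ (Γ₁ ∪ Γ₂) ⊆ orthant n ∧
      convexHull ℝ (Γ₁ ∪ Γ₂) + orthant n ⊆ convexHull ℝ (Γ₁ ∪ Γ₂) := by
  have hhull : convexHull ℝ (Γ₁ ∪ Γ₂) = convexJoin ℝ Γ₁ Γ₂ :=
    hconv₁.convexHull_union hconv₂ hne₁ hne₂
  refine ⟨?_, convex_convexHull _ _, convexHull_min (union_subset hsub₁ hsub₂)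
    (orthant_convex n), ?_⟩
  · -- Closedness
    rw [hhull]
    refine IsSeqClosed.isClosed ?_
    intro f x hf hx
    have H : ∀ k, ∃ a ∈ Γ₁, ∃ b ∈ Γ₂, ∃ s q : ℝ,
        0 ≤ s ∧ 0 ≤ q ∧ s + q = 1 ∧ s • a + q • b = f k := by
      intro k
      obtain ⟨a, ha, b, hb, hs⟩ := mem_convexJoin.mp (hf k)
      exact ⟨a, ha, b, hb, hs⟩
    choose a ha b hb s q hs0 hq0 hsq heq using H
    -- bound
    obtain ⟨C, hC⟩ : ∃ C, ∀ k, ‖f k‖ ≤ C := by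
      obtain ⟨C, hC⟩ := (isBounded_range_of_tendsto f hx).exists_norm_le
      exact ⟨C, fun k => hC _ (mem_range_self k)⟩
    have hC0 : 0 ≤ C := le_trans (norm_nonneg _) (hC 0)
    have hs1 : ∀ k, s k ≤ 1 := fun k => by linarith [hq0 k, hsq k]
    have hui : ∀ k i, 0 ≤ (s k • a k) i := fun k i =>
      mul_nonneg (hs0 k) (hsub₁ (ha k) i)
    have hwi : ∀ k i, 0 ≤ (q k • b k) i := fun k i =>
      mul_nonneg (hq0 k) (hsub₂ (hb k) i)
    have hfk : ∀ k i, f k i ≤ C := fun k i =>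
      le_trans (le_trans (le_abs_self _) (norm_le_pi_norm (f k) i)) (hC k)
    have hub : ∀ k, ‖s k • a k‖ ≤ C := by
      intro k
      refine (pi_norm_le_iff_of_nonneg hC0).mpr fun i => ?_
      rw [Real.norm_eq_abs, abs_of_nonneg (hui k i)]
      calc (s k • a k) i ≤ (s k • a k) i + (q k • b k) i := le_add_of_nonneg_right (hwi k i)
        _ = f k i := by rw [← heq k]; simp
        _ ≤ C := hfk k i
    have hwb : ∀ k, ‖q k • b k‖ ≤ C := by
      intro k
      refine (pi_norm_le_iff_of_nonneg hC0).mpr fun i => ?_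
      rw [Real.norm_eq_abs, abs_of_nonneg (hwi k i)]
      calc (q k • b k) i ≤ (s k • a k) i + (q k • b k) i := le_add_of_nonneg_left (hui k i)
        _ = f k i := by rw [← heq k]; simp
        _ ≤ C := hfk k i
    -- extract convergent subsequence
    set g : ℕ → ℝ × (Fin n → ℝ) × (Fin n → ℝ) :=
      fun k => (s k, s k • a k, q k • b k) with hg
    have hgmem : ∀ k, g k ∈ Icc (0:ℝ) 1 ×ˢ (closedBall (0 : Fin n → ℝ) C ×ˢ
        closedBall (0 : Fin n → ℝ) C) := by
      intro k
      refine ⟨⟨hs0 k, hs1 k⟩, ?_, ?_⟩ <;> rw [mem_closedBall_zero_iff]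
      exacts [hub k, hwb k]
    have hSbdd : IsBounded (Icc (0:ℝ) 1 ×ˢ (closedBall (0 : Fin n → ℝ) C ×ˢ
        closedBall (0 : Fin n → ℝ) C)) :=
      isBounded_Icc 0 1 |>.prod ((isBounded_closedBall).prod isBounded_closedBall)
    obtain ⟨z, -, φ, hφ, hgφ⟩ := tendsto_subseq_of_bounded hSbdd hgmem
    obtain ⟨t, u, w⟩ := z
    have htp : Tendsto (fun k => s (φ k)) atTop (𝓝 t) :=
      (continuous_fst.tendsto _).comp hgφ
    have hup : Tendsto (fun k => s (φ k) • a (φ k)) atTop (𝓝 u) :=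
      ((continuous_fst.comp continuous_snd).tendsto _).comp hgφ
    have hwp : Tendsto (fun k => q (φ k) • b (φ k)) atTop (𝓝 w) :=
      ((continuous_snd.comp continuous_snd).tendsto _).comp hgφ
    have hqp : Tendsto (fun k => q (φ k)) atTop (𝓝 (1 - t)) := by
      refine (tendsto_const_nhds.sub htp).congr fun k => ?_
      linarith [hsq (φ k)]
    have hxuw : x = u + w := by
      refine tendsto_nhds_unique (hx.comp hφ.tendsto_atTop) ?_
      refine (hup.add hwp).congr fun k => ?_
      exact heq (φ k)
    have ht0 : 0 ≤ t := ge_of_tendsto' htp fun k => hs0 (φ k)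
    have ht1 : t ≤ 1 := le_of_tendsto' htp fun k => hs1 (φ k)
    have huorth : u ∈ orthant n := fun i =>
      ge_of_tendsto' (((continuous_apply i).tendsto _).comp hup) fun k => hui (φ k) i
    have hworth : w ∈ orthant n := fun i =>
      ge_of_tendsto' (((continuous_apply i).tendsto _).comp hwp) fun k => hwi (φ k) i
    rcases eq_or_lt_of_le ht0 with h0 | h0
    · -- t = 0 : x ∈ Γ₂
      have hq1 : Tendsto (fun k => q (φ k)) atTop (𝓝 1) := by
        rw [← h0] at hqp; simpa using hqp
      have hw : w ∈ Γ₂ := by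
        have := aux_mem hcl₂ (fun k => hb (φ k)) one_pos hq1 hwp
        simpa using this
      have : x ∈ Γ₂ := hcomp₂ (show x ∈ Γ₂ + orthant n by
        rw [hxuw, add_comm u w]; exact Set.add_mem_add hw huorth)
      exact subset_convexJoin_right hne₁ this
    rcases eq_or_lt_of_le ht1 with h1 | h1
    · -- t = 1 : x ∈ Γ₁
      have hu1 : u ∈ Γ₁ := by
        have htp1 : Tendsto (fun k => s (φ k)) atTop (𝓝 1) := h1 ▸ htp
        have := aux_mem hcl₁ (fun k => ha (φ k)) one_pos htp1 hup
        simpa using this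
      have : x ∈ Γ₁ := hcomp₁ (by rw [hxuw]; exact Set.add_mem_add hu1 hworth)
      exact subset_convexJoin_left hne₂ this
    · -- 0 < t < 1
      have ha' : t⁻¹ • u ∈ Γ₁ := aux_mem hcl₁ (fun k => ha (φ k)) h0 htp hup
      have hb' : (1 - t)⁻¹ • w ∈ Γ₂ :=
        aux_mem hcl₂ (fun k => hb (φ k)) (by linarith) hqp hwp
      refine mem_convexJoin.mpr ⟨_, ha', _, hb', t, 1 - t, ht0, by linarith, by ring, ?_⟩
      rw [smul_inv_smul₀ h0.ne', smul_inv_smul₀ (by linarith : (1:ℝ) - t ≠ 0), hxuw]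
  · -- completeness
    have h1 : convexHull ℝ (Γ₁ ∪ Γ₂) + orthant n
        = convexHull ℝ ((Γ₁ ∪ Γ₂) + orthant n) := by
      rw [convexHull_add, (orthant_convex n).convexHull_eq]
    rw [h1]
    refine convexHull_mono ?_
    rw [Set.union_add]
    exact union_subset (hcomp₁.trans subset_union_left) (hcomp₂.trans subset_union_right)
end

section
/- Let n ≥ 1 and let c ∈ ℝⁿ with c_k > 0 for all k. The function z ↦ min_{1≤k≤n} |z_k|^{-2·c_k}, defined on the open unit polydisc 𝔻ⁿ = {z ∈ ℂⁿ : |z_k| < 1 for all k} (at the almost-every point of 𝔻ⁿ where all coordinates z_k ≠ 0; on the null set where some z_k = 0 the value may be assigned arbitrarily), is Lebesgue-integrable on 𝔻ⁿ with respect to the volume measure on ℂⁿ ≅ ℝ^{2n} if and only if Σ_{k=1}^n 1/c_k > 1. -/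
/-!
For `t > 0`, the part of the polydisc where `⨅ k, ‖z k‖ ^ (-(2 * c k)) > t` is the product of the
punctured discs of radii `(max 1 t) ^ (-1 / (2 c_k))`, so its volume is
`π ^ n * (max 1 t) ^ (-∑ k, 1 / c_k)`. By the layer-cake formula the function is integrable exactly
when this distribution function is integrable on `(0, ∞)`, i.e. when `∑ k, 1 / c_k > 1`.
-/

open MeasureTheory Set Metric
open scoped ENNReal NNReal

theorem lt_ciInf_iff_of_finite {ι α : Type*} [ConditionallyCompleteLinearOrder α] [Finite ι]
    [Nonempty ι] {f : ι → α} {a : α} : a < ⨅ i, f i ↔ ∀ i, a < f i := by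
  obtain ⟨i₀, hi₀⟩ := exists_eq_ciInf_of_finite (f := f)
  exact ⟨fun h i => h.trans_le (ciInf_le (Set.finite_range f).bddBelow i), fun h => hi₀ ▸ h i₀⟩

namespace Real

theorem max_one_rpow_of_nonpos {t q : ℝ} (ht : 0 < t) (hq : q ≤ 0) :
    max 1 t ^ q = min 1 (t ^ q) := by
  rcases le_total t 1 with h | h
  · rw [max_eq_left h, one_rpow, min_eq_left (one_le_rpow_of_pos_of_le_one_of_nonpos ht h hq)]
  · rw [max_eq_right h, min_eq_right (rpow_le_one_of_one_le_of_nonpos h hq)]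

/-- Since `0 ^ p = 0` for `p < 0`, the point `x = 0` lies in no superlevel set. -/
theorem lt_rpow_and_lt_one_iff {x t p : ℝ} (hx : 0 ≤ x) (ht : 0 < t) (hp : p < 0) :
    t < x ^ p ∧ x < 1 ↔ x ≠ 0 ∧ x < max 1 t ^ p⁻¹ := by
  rcases hx.eq_or_lt with rfl | hx
  · simp [zero_rpow hp.ne, ht.not_gt]
  · rw [max_one_rpow_of_nonpos ht (inv_nonpos.2 hp.le), lt_min_iff,
      lt_rpow_inv_iff_of_neg hx ht hp]
    exact ⟨fun h => ⟨hx.ne', h.2, h.1⟩, fun h => ⟨h.2.2, h.2.1⟩⟩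

end Real

theorem integrable_iff_lintegral_meas_lt_ne_top {α : Type*} [MeasurableSpace α] {μ : Measure α}
    {f : α → ℝ} (hf_nn : 0 ≤ᵐ[μ] f) (hfm : AEStronglyMeasurable f μ) :
    Integrable f μ ↔ ∫⁻ t in Ioi 0, μ {a | t < f a} ≠ ∞ := by
  rw [← lintegral_ofReal_ne_top_iff_integrable hfm hf_nn,
    lintegral_eq_lintegral_meas_lt μ hf_nn hfm.aemeasurable]

theorem integrableOn_Ioi_max_one_rpow_iff {s : ℝ} :
    IntegrableOn (fun t : ℝ => max 1 t ^ s) (Ioi 0) ↔ s < -1 := by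
  have h_one : EqOn (fun t : ℝ => max 1 t ^ s) 1 (Ioc 0 1) := fun t ht => by
    simp [max_eq_left ht.2]
  have h_tail : EqOn (fun t : ℝ => max 1 t ^ s) (fun t => t ^ s) (Ioi 1) := fun t ht => by
    simp [max_eq_right (le_of_lt (mem_Ioi.1 ht))]
  rw [← Ioc_union_Ioi_eq_Ioi zero_le_one, integrableOn_union,
    integrableOn_congr_fun h_tail measurableSet_Ioi, integrableOn_Ioi_rpow_iff one_pos,
    and_iff_right]
  exact (integrableOn_congr_fun h_one measurableSet_Ioc).2 (integrableOn_const measure_Ioc_lt_top.ne)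

section Polydisc

variable {ι : Type*} [Nonempty ι] {c : ι → ℝ}

theorem setOf_lt_iInf_rpow_inter_polydisc [Finite ι] (hc : ∀ k, 0 < c k) {t : ℝ} (ht : 0 < t) :
    {z : ι → ℂ | t < ⨅ k, ‖z k‖ ^ (-(2 * c k))} ∩ {z | ∀ k, ‖z k‖ < 1} =
      univ.pi fun k => ball 0 (max 1 t ^ (-(2 * c k))⁻¹) \ {0} := by
  ext z
  simp only [mem_inter_iff, mem_ofPred_eq, lt_ciInf_iff_of_finite, ← forall_and, mem_univ_pi,
    mem_sdiff, mem_ball_zero_iff, mem_singleton_iff, ← norm_ne_zero_iff (a := z _)]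
  refine forall_congr' fun k => ?_
  rw [Real.lt_rpow_and_lt_one_iff (norm_nonneg _) ht (by linarith [hc k]), and_comm]

theorem volume_setOf_lt_iInf_rpow_inter_polydisc [Fintype ι] (hc : ∀ k, 0 < c k) {t : ℝ}
    (ht : 0 < t) :
    volume ({z : ι → ℂ | t < ⨅ k, ‖z k‖ ^ (-(2 * c k))} ∩ {z | ∀ k, ‖z k‖ < 1}) =
      (NNReal.pi : ℝ≥0∞) ^ Fintype.card ι * .ofReal (max 1 t ^ (-∑ k, (c k)⁻¹)) := by
  have hmax : 0 < max 1 t := lt_max_of_lt_left one_pos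
  have h_sq : ∀ k, ENNReal.ofReal (max 1 t ^ (-(2 * c k))⁻¹) ^ 2 =
      .ofReal (max 1 t ^ (-(c k)⁻¹)) := fun k => by
    rw [← ENNReal.ofReal_pow (by positivity), ← Real.rpow_mul_natCast hmax.le]
    congr 2
    field_simp [(hc k).ne']
    norm_num
  simp only [setOf_lt_iInf_rpow_inter_polydisc hc ht, volume_pi_pi,
    measure_sdiff_null (measure_singleton _), Complex.volume_ball, h_sq, Finset.prod_mul_distrib,
    Finset.prod_const, Finset.card_univ]
  rw [mul_comm, ← ENNReal.ofReal_prod_of_nonneg fun k _ => by positivity,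
    ← Real.rpow_sum_of_pos hmax, Finset.sum_neg_distrib]

end Polydisc

/-- **Integrability of the exponential of a directional weight / log canonical
threshold for monomial weights:** for `c ∈ ℝⁿ` with all `c_k > 0`, the function
`z ↦ min_k |z_k|^{-2 c_k}` is Lebesgue-integrable on the unit polydisc
`𝔻ⁿ = {z : |z_k| < 1 for all k}` if and only if `Σ_k 1/c_k > 1`. -/
theorem integrableOn_min_rpow_iff (n : ℕ) (hn : 1 ≤ n) (c : Fin n → ℝ)
    (hc : ∀ k, 0 < c k) :
    IntegrableOn (fun z : Fin n → ℂ => ⨅ k, ‖z k‖ ^ (-(2 * c k)))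
        {z : Fin n → ℂ | ∀ k, ‖z k‖ < 1} volume ↔
      1 < ∑ k, (c k)⁻¹ := by
  have : Nonempty (Fin n) := Fin.pos_iff_nonempty.mp hn
  have hfm : Measurable fun z : Fin n → ℂ => ⨅ k, ‖z k‖ ^ (-(2 * c k)) := by fun_prop
  have h_level : ∀ t ∈ Ioi (0 : ℝ), volume.restrict {z : Fin n → ℂ | ∀ k, ‖z k‖ < 1}
      {z | t < ⨅ k, ‖z k‖ ^ (-(2 * c k))} =
      (NNReal.pi : ℝ≥0∞) ^ n * .ofReal (max 1 t ^ (-∑ k, (c k)⁻¹)) := fun t ht => by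
    rw [Measure.restrict_apply (measurableSet_lt measurable_const hfm),
      volume_setOf_lt_iInf_rpow_inter_polydisc hc ht, Fintype.card_fin]
  have h_const : ∀ x : ℝ≥0∞, (NNReal.pi : ℝ≥0∞) ^ n * x ≠ ∞ ↔ x ≠ ∞ := fun x => by
    simp [ENNReal.mul_eq_top, NNReal.pi_ne_zero]
  rw [IntegrableOn, integrable_iff_lintegral_meas_lt_ne_top
      (ae_of_all _ fun z => Real.iInf_nonneg fun k => by positivity) hfm.aestronglyMeasurable,
    setLIntegral_congr_fun measurableSet_Ioi h_level, lintegral_const_mul _ (by fun_prop),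
    h_const, lintegral_ofReal_ne_top_iff_integrable
      (Measurable.aestronglyMeasurable (by fun_prop))
      (ae_of_all _ fun t => by positivity), ← IntegrableOn, integrableOn_Ioi_max_one_rpow_iff]
  exact neg_lt_neg_iff
end
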